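/- arXiv:1306.5255 — 2 statements merged into one kernel-verified Lean document; each statement's English description precedes it below -/
import Mathlib

section
/- Let v be a special point with v ∈ closure(−C) and let u ∈ W₀. Set D := v + u(C), a Weyl chamber at v. Then either D ∩ C = ∅ or C ⊆ D. -/
open RealInnerProductSpace

/-- A finite, reduced, irreducible, crystallographic root system spanning `V`,
together with a regular vector `ξ` determining the positive system. -/
structure RootSystemData (V : Type*) [NormedAddCommGroup V] [InnerProductSpace ℝ V] where
  Φ : Set V
  ξ : V
  finite : Φ.Finite
  nonzero : ∀ α ∈ Φ, α ≠ 0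
  reduced : ∀ α ∈ Φ, ∀ c : ℝ, c • α ∈ Φ → c = 1 ∨ c = -1
  crystallographic : ∀ α ∈ Φ, ∀ β ∈ Φ, ∃ n : ℤ, 2 * ⟪β, α⟫ / ⟪α, α⟫ = (n : ℝ)
  reflect_mem : ∀ α ∈ Φ, ∀ β ∈ Φ, β - (2 * ⟪β, α⟫ / ⟪α, α⟫) • α ∈ Φ
  spans : Submodule.span ℝ Φ = ⊤
  irreducible : ∀ Φ₁ Φ₂ : Set V, Φ = Φ₁ ∪ Φ₂ →
    (∀ a ∈ Φ₁, ∀ b ∈ Φ₂, ⟪a, b⟫ = (0 : ℝ)) → Φ₁ = ∅ ∨ Φ₂ = ∅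
  regular : ∀ α ∈ Φ, ⟪ξ, α⟫ ≠ (0 : ℝ)

/-- The affine orthogonal reflection of `V` fixing the hyperplane `{x | ⟪x, α⟫ = k}` pointwise. -/
noncomputable def reflPt {V : Type*} [NormedAddCommGroup V] [InnerProductSpace ℝ V]
    (α : V) (k : ℝ) (x : V) : V := x - ((⟪x, α⟫ - k) * (2 / ⟪α, α⟫)) • α

namespace RootSystemData

variable {V : Type*} [NormedAddCommGroup V] [InnerProductSpace ℝ V]

/-- The positive system `Φ⁺` determined by `ξ`. -/
def pos (R : RootSystemData V) : Set V := {α | α ∈ R.Φ ∧ 0 < ⟪R.ξ, α⟫}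

/-- The open dominant Weyl chamber `C`. -/
def chamber (R : RootSystemData V) : Set V := {x | ∀ α ∈ R.pos, 0 < ⟪x, α⟫}

/-- The opposite chamber `−C`. -/
def antiChamber (R : RootSystemData V) : Set V := {x | -x ∈ R.chamber}

/-- The affine root hyperplane `H_{α,k}`. -/
def hyp (R : RootSystemData V) (α : V) (k : ℤ) : Set V := {x | ⟪x, α⟫ = (k : ℝ)}

/-- `H` is an affine root hyperplane. -/
def IsHyp (R : RootSystemData V) (H : Set V) : Prop := ∃ α ∈ R.Φ, ∃ k : ℤ, H = R.hyp α k

/-- The union of all affine root hyperplanes. -/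
def hypUnion (R : RootSystemData V) : Set V := {x | ∃ α ∈ R.Φ, ∃ k : ℤ, ⟪x, α⟫ = (k : ℝ)}

/-- An alcove: a connected component of the complement of the union of the affine root
hyperplanes. -/
def IsAlcove (R : RootSystemData V) (A : Set V) : Prop :=
  ∃ x ∈ R.hypUnionᶜ, A = connectedComponentIn R.hypUnionᶜ x

/-- The base alcove `A₀`. -/
def baseAlcove (R : RootSystemData V) : Set V :=
  {x | ∀ α ∈ R.pos, 0 < ⟪x, α⟫ ∧ ⟪x, α⟫ < 1}

/-- The sets `A` and `B` lie in the same open half-space determined by the affine root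
hyperplane `H`. -/
def SameSide (R : RootSystemData V) (H A B : Set V) : Prop :=
  ∃ α ∈ R.Φ, ∃ k : ℤ, H = R.hyp α k ∧
    ((∀ x ∈ A ∪ B, ⟪x, α⟫ < (k : ℝ)) ∨ (∀ x ∈ A ∪ B, (k : ℝ) < ⟪x, α⟫))

/-- The affine root hyperplane `H` separates `A` and `B`: they lie in the two different open
half-spaces determined by `H`. -/
def Separates (R : RootSystemData V) (H A B : Set V) : Prop :=
  ∃ α ∈ R.Φ, ∃ k : ℤ, H = R.hyp α k ∧
    (((∀ x ∈ A, ⟪x, α⟫ < (k : ℝ)) ∧ (∀ x ∈ B, (k : ℝ) < ⟪x, α⟫)) ∨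
     ((∀ x ∈ B, ⟪x, α⟫ < (k : ℝ)) ∧ (∀ x ∈ A, (k : ℝ) < ⟪x, α⟫)))

/-- `d(A, B)`: the number of affine root hyperplanes separating `A` from `B`. -/
noncomputable def dist (R : RootSystemData V) (A B : Set V) : ℕ :=
  {H : Set V | R.IsHyp H ∧ R.Separates H A B}.ncard

/-- Two alcoves are adjacent. -/
def Adjacent (R : RootSystemData V) (A B : Set V) : Prop := A ≠ B ∧ R.dist A B = 1

/-- `H` is a wall of the alcove `A`: it is an affine root hyperplane with
`d(A, r_H(A)) = 1`. -/
def IsWall (R : RootSystemData V) (H A : Set V) : Prop :=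
  ∃ α ∈ R.Φ, ∃ k : ℤ, H = R.hyp α k ∧ R.dist A (reflPt α (k : ℝ) '' A) = 1

/-- `H` is a wall of the dominant chamber `C`: `H ∩ C = ∅` and `H ∩ closure C` affinely
spans `H`. -/
def IsChamberWall (R : RootSystemData V) (H : Set V) : Prop :=
  R.IsHyp H ∧ H ∩ R.chamber = ∅ ∧ affineSpan ℝ (H ∩ closure R.chamber) = affineSpan ℝ H

/-- A special point of `V`. -/
def IsSpecial (R : RootSystemData V) (v : V) : Prop := ∀ α ∈ R.Φ, ∃ n : ℤ, ⟪v, α⟫ = (n : ℝ)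

/-- The finite Weyl group `W₀`: the group of linear isometries of `V` generated by the
reflections in the hyperplanes `H_{α,0}`, `α ∈ Φ`. -/
def W0 (R : RootSystemData V) : Subgroup (V ≃ₗᵢ[ℝ] V) :=
  Subgroup.closure {f | ∃ α ∈ R.Φ, ∀ x, f x = reflPt α 0 x}

/-- A finite gallery `(Bs 0, …, Bs n)`: consecutive alcoves are adjacent. -/
def IsGallery (R : RootSystemData V) (Bs : ℕ → Set V) (n : ℕ) : Prop :=
  (∀ i ≤ n, R.IsAlcove (Bs i)) ∧ ∀ i < n, R.Adjacent (Bs i) (Bs (i + 1))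

/-- The Umbrella property for a gallery `(Bs 0, …, Bs n)`, an alcove `A` and a wall `H`
of `A`: every alcove of the gallery is on the same side of `H` as `A`, and the gallery can
be extended to a minimal gallery from `Bs 0` to `A`. -/
def Umbrella (R : RootSystemData V) (Bs : ℕ → Set V) (n : ℕ) (A H : Set V) : Prop :=
  R.IsWall H A ∧ (∀ i ≤ n, R.SameSide H (Bs i) A) ∧
    ∃ m, n ≤ m ∧ ∃ Cs : ℕ → Set V, (∀ i ≤ n, Cs i = Bs i) ∧ Cs m = A ∧
      R.IsGallery Cs m ∧ R.dist (Cs 0) (Cs m) = m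

/-- The length of an invertible affine transformation: `ℓ(g) = d(A₀, g(A₀))`. -/
noncomputable def len (R : RootSystemData V) (g : V ≃ᵃ[ℝ] V) : ℕ :=
  R.dist R.baseAlcove (⇑g '' R.baseAlcove)

/-- `g` is a translation of `V`. -/
def IsTranslation (g : V ≃ᵃ[ℝ] V) : Prop := ∃ v : V, ∀ x, g x = x + v

/-- `s ∈ S_aff`: `s` is the reflection in an affine root hyperplane which is a wall of the
base alcove `A₀`. -/
def IsSimpleRefl (R : RootSystemData V) (s : V ≃ᵃ[ℝ] V) : Prop :=
  ∃ α ∈ R.Φ, ∃ k : ℤ, R.IsWall (R.hyp α k) R.baseAlcove ∧ ∀ x, s x = reflPt α (k : ℝ) x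

end RootSystemData

/-- The sequence of iterated conjugates `g, s₁gs₁, s₂s₁gs₁s₂, …`. -/
noncomputable def conjSeq {V : Type*} [NormedAddCommGroup V] [InnerProductSpace ℝ V]
    (g : V ≃ᵃ[ℝ] V) (ss : ℕ → V ≃ᵃ[ℝ] V) : ℕ → V ≃ᵃ[ℝ] V
  | 0 => g
  | n + 1 => ss n * conjSeq g ss n * ss n

namespace RootSystemData

variable {V : Type*} [NormedAddCommGroup V] [InnerProductSpace ℝ V]

/-- The Diamond Property for `g`: a sequence of length-preserving conjugations by simple
reflections leads to an element `g′` admitting a simple reflection `s` with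
`ℓ(sg′) > ℓ(g′)`, `ℓ(g′s) > ℓ(g′)` and `sg′s ≠ g′`. -/
def DiamondProperty (R : RootSystemData V) (g : V ≃ᵃ[ℝ] V) : Prop :=
  ∃ (n : ℕ) (ss : ℕ → V ≃ᵃ[ℝ] V), (∀ i < n, R.IsSimpleRefl (ss i)) ∧
    (∀ i < n, R.len (conjSeq g ss (i + 1)) = R.len g) ∧
    ∃ s : V ≃ᵃ[ℝ] V, R.IsSimpleRefl s ∧
      R.len (s * conjSeq g ss n) > R.len (conjSeq g ss n) ∧
      R.len (conjSeq g ss n * s) > R.len (conjSeq g ss n) ∧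
      s * conjSeq g ss n * s ≠ conjSeq g ss n

end RootSystemData

/-
Write `D = v + u(C)`. Since `u ∈ W₀` permutes `Φ`, for each positive root `α` the root `u α` is
positive or negative. A point `v + u c ∈ D ∩ C` forces it to be positive: otherwise `-u α` is
positive, so `⟪v, -u α⟫ ≤ 0` (as `v ∈ closure (−C)`) and `⟪c, α⟫ > 0`, whence
`⟪v + u c, -u α⟫ < 0`, contradicting `v + u c ∈ C`. Thus `u` maps `Φ⁺` into `Φ⁺`, and then every
`x ∈ C` satisfies `⟪u⁻¹ (x - v), α⟫ = ⟪x, u α⟫ - ⟪v, u α⟫ > 0`, i.e. `x ∈ D`.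
-/

namespace RootSystemData

variable {V : Type*} [NormedAddCommGroup V] [InnerProductSpace ℝ V] (R : RootSystemData V)

lemma neg_mem {α : V} (hα : α ∈ R.Φ) : -α ∈ R.Φ := by
  have hα₀ : ⟪α, α⟫ ≠ (0 : ℝ) := fun h => R.nonzero α hα (inner_self_eq_zero.mp h)
  have h := R.reflect_mem α hα α hα
  rwa [mul_div_assoc, div_self hα₀, mul_one, two_smul, sub_add_cancel_left] at h

lemma reflPt_zero_mem {α β : V} (hα : α ∈ R.Φ) (hβ : β ∈ R.Φ) : reflPt α 0 β ∈ R.Φ := by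
  convert R.reflect_mem α hα β hβ using 3
  rw [reflPt, sub_zero, mul_div_assoc', mul_comm]

lemma image_eq_of_mem_W0 {u : V ≃ₗᵢ[ℝ] V} (hu : u ∈ R.W0) : ⇑u '' R.Φ = R.Φ := by
  induction hu using Subgroup.closure_induction with
  | mem f hf =>
    obtain ⟨α, hα, hfα⟩ := hf
    have hmaps : Set.MapsTo f R.Φ R.Φ := fun β hβ => hfα β ▸ R.reflPt_zero_mem hα hβ
    exact ((R.finite.injOn_iff_bijOn_of_mapsTo hmaps).mp f.injective.injOn).image_eq
  | one => simp
  | mul f g _ _ hf hg =>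
    rw [LinearIsometryEquiv.coe_mul, Set.image_comp, hg, hf]
  | inv f _ hf =>
    conv_lhs => rw [← hf]
    rw [← Set.image_comp, LinearIsometryEquiv.coe_inv, ← LinearIsometryEquiv.coe_trans,
      LinearIsometryEquiv.self_trans_symm, LinearIsometryEquiv.coe_refl, Set.image_id]

lemma inner_nonpos_of_mem_closure_antiChamber {v : V} (hv : v ∈ closure R.antiChamber)
    {α : V} (hα : α ∈ R.pos) : ⟪v, α⟫ ≤ (0 : ℝ) := by
  refine closure_minimal (t := {x : V | ⟪x, α⟫ ≤ 0}) (fun x hx => ?_)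
    (isClosed_le (continuous_id.inner continuous_const) continuous_const) hv
  have h := hx α hα
  rw [inner_neg_left] at h
  exact (neg_pos.mp h).le

lemma mapsTo_pos_of_mem_chamber {u : V ≃ₗᵢ[ℝ] V} (hu : Set.MapsTo u R.Φ R.Φ) {v : V}
    (hv : v ∈ closure R.antiChamber) {c : V} (hc : c ∈ R.chamber) (hvc : v + u c ∈ R.chamber) :
    Set.MapsTo u R.pos R.pos := by
  intro α hα
  have huα : u α ∈ R.Φ := hu hα.1
  refine ⟨huα, (R.regular _ huα).lt_or_gt.resolve_left fun hneg => ?_⟩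
  have hneg_pos : -u α ∈ R.pos := ⟨R.neg_mem huα, by rwa [inner_neg_right, neg_pos]⟩
  have h₁ := hvc _ hneg_pos
  have h₂ := R.inner_nonpos_of_mem_closure_antiChamber hv hneg_pos
  have h₃ : 0 < ⟪c, α⟫ := hc α hα
  rw [inner_add_left, inner_neg_right, inner_neg_right, u.inner_map_map] at h₁
  rw [inner_neg_right] at h₂
  linarith

lemma chamber_subset_image_of_mapsTo_pos {u : V ≃ₗᵢ[ℝ] V} (hu : Set.MapsTo u R.pos R.pos)
    {v : V} (hv : v ∈ closure R.antiChamber) :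
    R.chamber ⊆ (fun x => v + u x) '' R.chamber := by
  intro x hx
  refine ⟨u.symm (x - v), fun α hα => ?_, by simp⟩
  have h₁ := hx _ (hu hα)
  have h₂ := R.inner_nonpos_of_mem_closure_antiChamber hv (hu hα)
  rw [← u.inner_map_map, u.apply_symm_apply, inner_sub_left]
  linarith

end RootSystemData

theorem statement2_general {V : Type*} [NormedAddCommGroup V] [InnerProductSpace ℝ V]
    (R : RootSystemData V) (v : V)
    (hvC : v ∈ closure R.antiChamber) (u : V ≃ₗᵢ[ℝ] V) (hu : u ∈ R.W0) :
    ((fun x => v + u x) '' R.chamber) ∩ R.chamber = ∅ ∨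
      R.chamber ⊆ (fun x => v + u x) '' R.chamber := by
  refine (Set.eq_empty_or_nonempty _).imp_right fun ⟨_, ⟨c, hc, hvc⟩, hvcC⟩ => ?_
  subst hvc
  have huΦ : Set.MapsTo u R.Φ R.Φ := fun α hα =>
    R.image_eq_of_mem_W0 hu ▸ Set.mem_image_of_mem u hα
  exact R.chamber_subset_image_of_mapsTo_pos (R.mapsTo_pos_of_mem_chamber huΦ hvC hc hvcC) hvC

/-- if `v` is a special point with `v ∈ closure (−C)`, `u ∈ W₀` and
`D = v + u(C)`, then either `D ∩ C = ∅` or `C ⊆ D`. -/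
theorem statement2 {V : Type*} [NormedAddCommGroup V] [InnerProductSpace ℝ V]
    [FiniteDimensional ℝ V] (R : RootSystemData V) (v : V) (hv : R.IsSpecial v)
    (hvC : v ∈ closure R.antiChamber) (u : V ≃ₗᵢ[ℝ] V) (hu : u ∈ R.W0) :
    ((fun x => v + u x) '' R.chamber) ∩ R.chamber = ∅ ∨
      R.chamber ⊆ (fun x => v + u x) '' R.chamber :=
  statement2_general R v hvC u hu
end

section
/- Let μ belong to the ℤ-span of the coroots {α∨ : α ∈ Φ} and suppose μ ∈ C. Then for every R ∈ ℕ there exists N₀ ∈ ℕ such that for all N ≥ N₀ and every alcove B with d(Nμ + A₀, B) ≤ R, one has B ⊆ C. (Here Nμ + A₀, the translate of the base alcove by Nμ, is again an alcove.) -/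
open RealInnerProductSpace

namespace RootSystemData

variable {V : Type*} [NormedAddCommGroup V] [InnerProductSpace ℝ V] (R : RootSystemData V)

theorem inner_coroot_mem_int {α β : V} (hα : α ∈ R.Φ) (hβ : β ∈ R.Φ) :
    ∃ n : ℤ, ⟪(2 / ⟪β, β⟫) • β, α⟫ = n := by
  obtain ⟨n, hn⟩ := R.crystallographic β hβ α hα
  refine ⟨n, ?_⟩
  rw [real_inner_smul_left, real_inner_comm α β, ← hn]
  ring

theorem inner_mem_int_of_mem_span_coroots {μ : V}
    (hμ : μ ∈ Submodule.span ℤ {w : V | ∃ β ∈ R.Φ, w = (2 / ⟪β, β⟫) • β})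
    {α : V} (hα : α ∈ R.Φ) : ∃ n : ℤ, ⟪μ, α⟫ = n := by
  induction hμ using Submodule.span_induction with
  | mem w hw =>
    obtain ⟨β, hβ, rfl⟩ := hw
    exact R.inner_coroot_mem_int hα hβ
  | zero => exact ⟨0, by simp⟩
  | add x y _ _ hx hy =>
    obtain ⟨n, hn⟩ := hx
    obtain ⟨m, hm⟩ := hy
    exact ⟨n + m, by rw [inner_add_left, hn, hm]; push_cast; ring⟩
  | smul c x _ hx =>
    obtain ⟨n, hn⟩ := hx
    exact ⟨c * n, by rw [← Int.cast_smul_eq_zsmul ℝ, real_inner_smul_left, hn]; push_cast; ring⟩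

theorem one_le_inner_of_mem_chamber {μ : V} (hμC : μ ∈ R.chamber) {α : V} (hα : α ∈ R.pos)
    (hint : ∃ n : ℤ, ⟪μ, α⟫ = n) : 1 ≤ ⟪μ, α⟫ := by
  obtain ⟨n, hn⟩ := hint
  have hpos : (0 : ℝ) < n := hn ▸ hμC α hα
  rw [hn]
  exact_mod_cast (show (0 : ℤ) < n by exact_mod_cast hpos)

theorem xi_mem_chamber : R.ξ ∈ R.chamber := fun _ hα => hα.2

theorem baseAlcove_nonempty : R.baseAlcove.Nonempty := by
  obtain ⟨c, hc⟩ := ((R.finite.subset fun _ hα => hα.1 : R.pos.Finite).image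
    fun α => ⟪R.ξ, α⟫).bddAbove
  have hc1 : (0 : ℝ) < max c 1 + 1 := by positivity
  refine ⟨(max c 1 + 1)⁻¹ • R.ξ, fun α hα => ?_⟩
  have hle : ⟪R.ξ, α⟫ ≤ max c 1 := (hc ⟨α, hα, rfl⟩).trans (le_max_left _ _)
  rw [real_inner_smul_left, inv_mul_eq_div]
  exact ⟨div_pos (R.xi_mem_chamber α hα) hc1, (div_lt_one hc1).2 (by linarith)⟩

theorem hyp_injective {α : V} (hα : α ≠ 0) : Function.Injective (R.hyp α) := by
  intro k k' hkk'
  have hαα : ⟪α, α⟫ ≠ 0 := inner_self_ne_zero.2 hα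
  have hp : ((k : ℝ) / ⟪α, α⟫) • α ∈ R.hyp α k := by
    show ⟪_, α⟫ = _
    rw [real_inner_smul_left, div_mul_cancel₀ _ hαα]
  have hp' : ((k : ℝ) / ⟪α, α⟫) • α ∈ R.hyp α k' := hkk' ▸ hp
  exact_mod_cast (show ⟪((k : ℝ) / ⟪α, α⟫) • α, α⟫ = k from hp).symm.trans hp'

theorem finite_separating {A B : Set V} {a b : V} (ha : a ∈ A) (hb : b ∈ B) :
    {H : Set V | R.IsHyp H ∧ R.Separates H A B}.Finite := by
  refine ((R.finite.biUnion fun α _ => (Set.finite_Icc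
    ⌈min ⟪a, α⟫ ⟪b, α⟫⌉ ⌊max ⟪a, α⟫ ⟪b, α⟫⌋).image (R.hyp α))).subset ?_
  rintro H ⟨-, α, hα, k, rfl, hsep⟩
  refine Set.mem_biUnion hα ⟨k, ?_, rfl⟩
  rcases hsep with ⟨hA, hB⟩ | ⟨hB, hA⟩
  · exact ⟨Int.ceil_le.2 ((min_le_left _ _).trans (hA a ha).le),
      Int.le_floor.2 ((hB b hb).le.trans (le_max_right _ _))⟩
  · exact ⟨Int.ceil_le.2 ((min_le_right _ _).trans (hB b hb).le),
      Int.le_floor.2 ((hA a ha).le.trans (le_max_left _ _))⟩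

theorem card_le_dist_of_separates {A B : Set V} (hA : A.Nonempty) (hB : B.Nonempty)
    {α : V} (hα : α ∈ R.Φ) {m n : ℤ} (hsep : ∀ k ∈ Set.Icc m n, R.Separates (R.hyp α k) A B) :
    (n + 1 - m).toNat ≤ R.dist A B := by
  obtain ⟨a, ha⟩ := hA
  obtain ⟨b, hb⟩ := hB
  have hsub : R.hyp α '' Set.Icc m n ⊆ {H | R.IsHyp H ∧ R.Separates H A B} := by
    rintro _ ⟨k, hk, rfl⟩
    exact ⟨⟨α, hα, k, rfl⟩, hsep k hk⟩
  calc (n + 1 - m).toNat = (R.hyp α '' Set.Icc m n).ncard := by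
        rw [((R.hyp_injective (R.nonzero α hα)).injOn).ncard_image, ← Finset.coe_Icc,
          Set.ncard_coe_finset, Int.card_Icc]
    _ ≤ R.dist A B := Set.ncard_le_ncard hsub (R.finite_separating ha hb)

namespace IsAlcove

variable {R} {B : Set V} (hB : R.IsAlcove B)
include hB

theorem inner_ne_int {y : V} (hy : y ∈ B) {α : V} (hα : α ∈ R.Φ) (k : ℤ) : ⟪y, α⟫ ≠ k := by
  obtain ⟨x, -, rfl⟩ := hB
  exact fun hk => connectedComponentIn_subset _ _ hy ⟨α, hα, k, hk⟩

theorem inner_lt_of_inner_lt {α : V} (hα : α ∈ R.Φ) {k : ℤ} {b : V} (hb : b ∈ B)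
    (hbk : ⟪b, α⟫ < k) {y : V} (hy : y ∈ B) : ⟪y, α⟫ < k := by
  refine (le_or_gt ⟪y, α⟫ k).elim (fun hle => hle.lt_of_ne (hB.inner_ne_int hy hα k)) ?_
  intro hyk
  have hconn : IsPreconnected ((fun z => ⟪z, α⟫) '' B) := by
    obtain ⟨x, -, rfl⟩ := hB
    exact isPreconnected_connectedComponentIn.image _
      (continuous_id.inner continuous_const).continuousOn
  obtain ⟨z, hz, hzk⟩ := hconn.Icc_subset ⟨b, hb, rfl⟩ ⟨y, hy, rfl⟩ ⟨hbk.le, hyk.le⟩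
  exact absurd hzk (hB.inner_ne_int hz hα k)

end IsAlcove

theorem lt_inner_of_mem_translate_baseAlcove {μ α : V} (hα : α ∈ R.pos) (hμα : 1 ≤ ⟪μ, α⟫)
    {c : ℝ} (hc : 0 ≤ c) {x : V} (hx : x ∈ (fun y => c • μ + y) '' R.baseAlcove) :
    c < ⟪x, α⟫ := by
  obtain ⟨a, ha, rfl⟩ := hx
  rw [inner_add_left, real_inner_smul_left]
  nlinarith [(ha α hα).1]

end RootSystemData

theorem statement4_general {V : Type*} [NormedAddCommGroup V] [InnerProductSpace ℝ V]
    (R : RootSystemData V) (μ : V)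
    (hμ : μ ∈ Submodule.span ℤ {w : V | ∃ α ∈ R.Φ, w = (2 / ⟪α, α⟫) • α})
    (hμC : μ ∈ R.chamber) :
    ∀ Rad : ℕ, ∃ N₀ : ℕ, ∀ N ≥ N₀, ∀ B : Set V, R.IsAlcove B →
      R.dist ((fun x => (N : ℝ) • μ + x) '' R.baseAlcove) B ≤ Rad → B ⊆ R.chamber := by
  intro Rad
  refine ⟨Rad + 1, fun N hN B hB hd b hb α hα => ?_⟩
  by_contra! hbα
  -- Otherwise B lies below `H_{α,0}` while `Nμ + A₀` lies above `H_{α,N}`, so the `Rad + 1`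
  -- hyperplanes `H_{α,k}`, `0 ≤ k ≤ Rad`, all separate them.
  have hbα' : ⟪b, α⟫ < ((0 : ℤ) : ℝ) := by
    simpa using hbα.lt_of_ne (by simpa using hB.inner_ne_int hb hα.1 0)
  have hμα := R.one_le_inner_of_mem_chamber hμC hα (R.inner_mem_int_of_mem_span_coroots hμ hα.1)
  have hsep : ∀ k ∈ Set.Icc (0 : ℤ) Rad,
      R.Separates (R.hyp α k) ((fun x => (N : ℝ) • μ + x) '' R.baseAlcove) B := by
    intro k ⟨hk0, hkRad⟩
    have hkN : (k : ℝ) < N := by exact_mod_cast (show k < N by omega)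
    refine ⟨α, hα.1, k, rfl, Or.inr ⟨fun y hy => ?_, fun x hx => ?_⟩⟩
    · exact (hB.inner_lt_of_inner_lt hα.1 hb hbα' hy).trans_le (by exact_mod_cast hk0)
    · exact hkN.trans (R.lt_inner_of_mem_translate_baseAlcove hα hμα N.cast_nonneg hx)
  have hcard := R.card_le_dist_of_separates (R.baseAlcove_nonempty.image _) ⟨b, hb⟩ hα.1 hsep
  omega

/-- if `μ` lies in the ℤ-span of the coroots and `μ ∈ C`, then for every `R ∈ ℕ`
all alcoves within distance `R` of `Nμ + A₀` are contained in `C`, for all sufficiently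
large `N`. -/
theorem statement4 {V : Type*} [NormedAddCommGroup V] [InnerProductSpace ℝ V]
    [FiniteDimensional ℝ V] (R : RootSystemData V) (μ : V)
    (hμ : μ ∈ Submodule.span ℤ {w : V | ∃ α ∈ R.Φ, w = (2 / ⟪α, α⟫) • α})
    (hμC : μ ∈ R.chamber) :
    ∀ Rad : ℕ, ∃ N₀ : ℕ, ∀ N ≥ N₀, ∀ B : Set V, R.IsAlcove B →
      R.dist ((fun x => (N : ℝ) • μ + x) '' R.baseAlcove) B ≤ Rad → B ⊆ R.chamber :=
  statement4_general R μ hμ hμC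
end
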